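/- arXiv:1411.6824 — 3 statements merged into one kernel-verified Lean document; each statement's English description precedes it below -/
import Mathlib

section
/- Let R be a nonnegative random variable with lim_{h→∞} h^s P(R > h) = β for β, s > 0, and let α > 0 satisfy s < α + d. Then lim_{n→∞} n^{s-α-d} ∫_{[-n/2,n/2]^d} |ξ|^α P(R > |ξ|) dξ = β · ∫_{[-1/2,1/2]^d} |η|^{α-s} dη. -/
open MeasureTheory Filter
open scoped ENNReal Topology Pointwise

lemma aux_int {d : ℕ} (hd : 1 ≤ d) {t : ℝ} (ht : -(d : ℝ) < t) (c : ℝ) :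
    IntegrableOn (fun x : EuclideanSpace ℝ (Fin d) => ‖x‖ ^ t)
      (Metric.closedBall 0 c) := by
  rcases le_or_gt 0 t with h0 | h0
  · exact (continuous_norm.rpow_const fun x => Or.inr h0).continuousOn.integrableOn_compact
      (isCompact_closedBall 0 c)
  · have hmeas : Measurable fun x : EuclideanSpace ℝ (Fin d) => ‖x‖ ^ t := by fun_prop
    refine ⟨hmeas.aestronglyMeasurable, ?_⟩
    rw [hasFiniteIntegral_iff_ofReal (Eventually.of_forall fun x => Real.rpow_nonneg (norm_nonneg _) t)]
    set ν := volume.restrict (Metric.closedBall (0 : EuclideanSpace ℝ (Fin d)) c)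
    rw [lintegral_eq_lintegral_meas_le ν
      (Eventually.of_forall fun x => Real.rpow_nonneg (norm_nonneg _) t)
      (hmeas.aemeasurable)]
    set mB := volume (Metric.ball (0 : EuclideanSpace ℝ (Fin d)) 1)
    have key : ∀ u : ℝ, 0 < u →
        ν {a | u ≤ ‖a‖ ^ t} ≤ volume (Metric.closedBall (0 : EuclideanSpace ℝ (Fin d)) (u ^ t⁻¹)) := by
      intro u hu
      refine (Measure.restrict_apply_le _ _).trans (measure_mono ?_)
      intro a ha
      simp only [Set.mem_setOf_eq] at ha
      rcases eq_or_ne a 0 with rfl | ha0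
      · exfalso
        rw [norm_zero, Real.zero_rpow h0.ne] at ha
        exact absurd (hu.trans_le ha) (lt_irrefl 0)
      · have hna : 0 < ‖a‖ := norm_pos_iff.2 ha0
        rw [Metric.mem_closedBall, dist_zero_right]
        exact (Real.le_rpow_inv_iff_of_neg hna hu h0).2 ha
    calc ∫⁻ u in Set.Ioi (0:ℝ), ν {a | u ≤ ‖a‖ ^ t}
        ≤ ∫⁻ u in Set.Ioc (0:ℝ) 1 ∪ Set.Ioi 1, ν {a | u ≤ ‖a‖ ^ t} :=
          lintegral_mono_set Set.Ioi_subset_Ioc_union_Ioi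
      _ ≤ (∫⁻ u in Set.Ioc (0:ℝ) 1, ν {a | u ≤ ‖a‖ ^ t}) + ∫⁻ u in Set.Ioi (1:ℝ), ν {a | u ≤ ‖a‖ ^ t} :=
          lintegral_union_le _ _ _
      _ < ∞ := by
          refine ENNReal.add_lt_top.2 ⟨?_, ?_⟩
          · calc ∫⁻ u in Set.Ioc (0:ℝ) 1, ν {a | u ≤ ‖a‖ ^ t}
                ≤ ∫⁻ _ in Set.Ioc (0:ℝ) 1, volume (Metric.closedBall (0 : EuclideanSpace ℝ (Fin d)) c) := by
                  refine setLIntegral_mono' measurableSet_Ioc fun u hu => ?_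
                  exact (measure_mono (Set.subset_univ _)).trans_eq (by simp [ν])
              _ = volume (Metric.closedBall (0 : EuclideanSpace ℝ (Fin d)) c) * volume (Set.Ioc (0:ℝ) 1) :=
                  setLIntegral_const _ _
              _ < ∞ := ENNReal.mul_lt_top measure_closedBall_lt_top (by simp)
          · have hdt : (d : ℝ) / t < -1 := by
              rw [div_lt_iff_of_neg h0]
              linarith
            have hint : IntegrableOn (fun u : ℝ => u ^ ((d : ℝ) / t)) (Set.Ioi 1) :=
              integrableOn_Ioi_rpow_of_lt hdt one_pos
            calc ∫⁻ u in Set.Ioi (1:ℝ), ν {a | u ≤ ‖a‖ ^ t}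
                ≤ ∫⁻ u in Set.Ioi (1:ℝ), ENNReal.ofReal (u ^ ((d:ℝ)/t)) * mB := by
                  refine setLIntegral_mono' measurableSet_Ioi fun u hu => ?_
                  refine (key u (lt_trans one_pos hu)).trans ?_
                  rw [Measure.addHaar_closedBall _ _ (Real.rpow_nonneg (le_of_lt (lt_trans one_pos hu)) _)]
                  have : (u ^ t⁻¹) ^ (Module.finrank ℝ (EuclideanSpace ℝ (Fin d))) = u ^ ((d:ℝ)/t) := by
                    rw [finrank_euclideanSpace_fin, ← Real.rpow_natCast (u ^ t⁻¹) d,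
                      ← Real.rpow_mul (le_of_lt (lt_trans one_pos hu))]
                    ring_nf
                  rw [this]
              _ = (∫⁻ u in Set.Ioi (1:ℝ), ENNReal.ofReal (u ^ ((d:ℝ)/t))) * mB :=
                  lintegral_mul_const' _ _ measure_ball_lt_top.ne
              _ < ∞ := ENNReal.mul_lt_top hint.setLIntegral_lt_top measure_ball_lt_top

/-- If `R` (law `μR`) has regularly varying tail `h^s P(R > h) → β` with `0 < s < α + d`,
then `n^{s-α-d} ∫_{[-n/2,n/2]^d} ‖ξ‖^α P(R > ‖ξ‖) dξ → β ∫_{[-1/2,1/2]^d} ‖η‖^{α-s} dη`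
as `n → ∞`. -/
theorem stmt4 {d : ℕ} (hd : 1 ≤ d) {α s β : ℝ} (hα : 0 < α) (hs : 0 < s) (hβ : 0 < β)
    (hsad : s < α + d)
    (μR : Measure ℝ) [IsProbabilityMeasure μR] (hμR : μR (Set.Iio 0) = 0)
    (htail : Tendsto (fun h : ℝ => h ^ s * (μR (Set.Ioi h)).toReal) atTop (𝓝 β)) :
    Tendsto (fun n : ℝ => n ^ (s - α - d) *
        ∫ ξ in {ξ : EuclideanSpace ℝ (Fin d) | ∀ i, |ξ i| ≤ n / 2},
          ‖ξ‖ ^ α * (μR (Set.Ioi ‖ξ‖)).toReal)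
      atTop
      (𝓝 (β * ∫ η in {η : EuclideanSpace ℝ (Fin d) | ∀ i, |η i| ≤ 1 / 2},
          ‖η‖ ^ (α - s))) := by
  haveI : Nonempty (Fin d) := ⟨⟨0, hd⟩⟩
  haveI : Nontrivial (EuclideanSpace ℝ (Fin d)) := inferInstance
  have hA1sub : {η : (EuclideanSpace ℝ (Fin d)) | ∀ i, |η i| ≤ 1 / 2} ⊆ Metric.closedBall 0 (d : ℝ) := by
    intro η hη
    rw [Metric.mem_closedBall, dist_zero_right]
    have h1 : ‖η‖ ≤ Real.sqrt d := by
      rw [EuclideanSpace.norm_eq]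
      refine Real.sqrt_le_sqrt ?_
      calc ∑ i, ‖η i‖ ^ 2 ≤ ∑ _i : Fin d, 1 := by
            refine Finset.sum_le_sum fun i _ => ?_
            have := hη i
            have h2 : ‖η i‖ ≤ 1 := by
              rw [Real.norm_eq_abs]; linarith
            nlinarith [norm_nonneg (η i)]
        _ = d := by simp
    refine h1.trans ?_
    have h1d : (1 : ℝ) ≤ d := by exact_mod_cast hd
    exact (Real.sqrt_le_sqrt (by nlinarith : (d:ℝ) ≤ (d:ℝ)^2)).trans_eq
      (Real.sqrt_sq (by positivity))
  -- the scaled integrand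
  set Fn : ℝ → (EuclideanSpace ℝ (Fin d)) → ℝ :=
    fun n η => ‖η‖ ^ α * (n ^ s * (μR (Set.Ioi (n * ‖η‖))).toReal) with hFn
  -- tail function facts
  have hPle1 : ∀ h : ℝ, (μR (Set.Ioi h)).toReal ≤ 1 := by
    intro h
    have := ENNReal.toReal_mono (measure_ne_top μR _) (measure_mono (Set.subset_univ (Set.Ioi h)))
    simpa using this
  have hPmeas : Measurable fun h : ℝ => (μR (Set.Ioi h)).toReal := by
    have h1 : Antitone fun h : ℝ => (μR (Set.Ioi h)).toReal := fun a b hab =>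
      ENNReal.toReal_mono (measure_ne_top μR _) (measure_mono (Set.Ioi_subset_Ioi hab))
    exact h1.measurable
  -- a.e. nonzero
  have h0 : ∀ᵐ η : (EuclideanSpace ℝ (Fin d)) ∂volume, η ≠ 0 := by
    rw [ae_iff]
    simp only [Classical.not_not]
    simpa [Set.setOf_eq_eq_singleton] using measure_singleton (0 : (EuclideanSpace ℝ (Fin d)))
  -- step A : change of variables
  have hstep : ∀ n : ℝ, 0 < n →
      n ^ (s - α - d) * ∫ ξ in {ξ : (EuclideanSpace ℝ (Fin d)) | ∀ i, |ξ i| ≤ n / 2},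
          ‖ξ‖ ^ α * (μR (Set.Ioi ‖ξ‖)).toReal
        = ∫ η in {η : (EuclideanSpace ℝ (Fin d)) | ∀ i, |η i| ≤ 1 / 2}, Fn n η := by
    intro n hn
    have hsmulset : n • {η : (EuclideanSpace ℝ (Fin d)) | ∀ i, |η i| ≤ 1 / 2} = {ξ : (EuclideanSpace ℝ (Fin d)) | ∀ i, |ξ i| ≤ n / 2} := by
      ext x
      rw [Set.mem_smul_set_iff_inv_smul_mem₀ hn.ne']
      simp only [Set.mem_setOf_eq, PiLp.smul_apply, smul_eq_mul, abs_mul, abs_inv,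
        abs_of_pos hn]
      refine forall_congr' fun i => ?_
      rw [inv_mul_le_iff₀ hn, mul_one_div]
    have hcs := MeasureTheory.Measure.setIntegral_comp_smul_of_pos
      (volume : Measure (EuclideanSpace ℝ (Fin d))) (fun ξ => ‖ξ‖ ^ α * (μR (Set.Ioi ‖ξ‖)).toReal)
      {η : (EuclideanSpace ℝ (Fin d)) | ∀ i, |η i| ≤ 1 / 2} hn
    rw [hsmulset] at hcs
    have hdim : Module.finrank ℝ (EuclideanSpace ℝ (Fin d)) = d := finrank_euclideanSpace_fin
    rw [hdim] at hcs
    -- rewrite Fn pointwise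
    have hF : ∀ η : (EuclideanSpace ℝ (Fin d)),
        Fn n η = n ^ (s - α) * (‖n • η‖ ^ α * (μR (Set.Ioi ‖n • η‖)).toReal) := by
      intro η
      have hns : ‖n • η‖ = n * ‖η‖ := by
        rw [norm_smul, Real.norm_eq_abs, abs_of_pos hn]
      rw [hns, Real.mul_rpow hn.le (norm_nonneg _), hFn]
      have hpow : n ^ (s - α) * n ^ α = n ^ s := by
        rw [← Real.rpow_add hn, sub_add_cancel]
      set T := (μR (Set.Ioi (n * ‖η‖))).toReal
      linear_combination (-(‖η‖ ^ α * T)) * hpow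
    calc n ^ (s - α - d) * ∫ ξ in {ξ : (EuclideanSpace ℝ (Fin d)) | ∀ i, |ξ i| ≤ n / 2},
            ‖ξ‖ ^ α * (μR (Set.Ioi ‖ξ‖)).toReal
        = n ^ (s - α) * ((n ^ d)⁻¹ • ∫ ξ in {ξ : (EuclideanSpace ℝ (Fin d)) | ∀ i, |ξ i| ≤ n / 2},
            ‖ξ‖ ^ α * (μR (Set.Ioi ‖ξ‖)).toReal) := by
          rw [smul_eq_mul, ← mul_assoc]
          congr 1
          rw [← Real.rpow_natCast n d, ← Real.rpow_neg hn.le, ← Real.rpow_add hn]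
          ring_nf
      _ = n ^ (s - α) * ∫ η in {η : (EuclideanSpace ℝ (Fin d)) | ∀ i, |η i| ≤ 1 / 2},
            ‖n • η‖ ^ α * (μR (Set.Ioi ‖n • η‖)).toReal := by rw [← hcs]
      _ = ∫ η in {η : (EuclideanSpace ℝ (Fin d)) | ∀ i, |η i| ≤ 1 / 2}, Fn n η := by
          rw [← integral_const_mul]
          refine setIntegral_congr_fun ?_ fun η _ => (hF η).symm
          · -- measurability of the cube
            have : {η : (EuclideanSpace ℝ (Fin d)) | ∀ i, |η i| ≤ 1 / 2} =
                ⋂ i, {η : (EuclideanSpace ℝ (Fin d)) | |η i| ≤ 1 / 2} := by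
              ext η; simp
            rw [this]
            exact MeasurableSet.iInter fun i =>
              measurableSet_le (by fun_prop) measurable_const
  -- bound constants
  have hev : ∀ᶠ h : ℝ in atTop, h ^ s * (μR (Set.Ioi h)).toReal ≤ β + 1 :=
    htail.eventually (eventually_le_nhds (lt_add_one β))
  obtain ⟨h₀, hh₀⟩ := eventually_atTop.1 hev
  set h₁ := max h₀ 1 with hh₁
  have hh₁pos : 0 < h₁ := lt_of_lt_of_le one_pos (le_max_right _ _)
  set C := max (β + 1) (h₁ ^ s) with hC
  have hCβ : β + 1 ≤ C := le_max_left _ _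
  have hCh : h₁ ^ s ≤ C := le_max_right _ _
  -- key domination bound
  have hkey : ∀ n : ℝ, 1 ≤ n → ∀ η : (EuclideanSpace ℝ (Fin d)), η ≠ 0 → Fn n η ≤ C * ‖η‖ ^ (α - s) := by
    intro n hn η hη
    have hn0 : (0 : ℝ) < n := lt_of_lt_of_le one_pos hn
    have hnp : 0 < ‖η‖ := norm_pos_iff.2 hη
    set T := (μR (Set.Ioi (n * ‖η‖))).toReal with hT
    have hT0 : 0 ≤ T := ENNReal.toReal_nonneg
    have hT1 : T ≤ 1 := hPle1 _
    have hinv0 : 0 ≤ ‖η‖ ^ (-s) := Real.rpow_nonneg hnp.le _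
    have hns : n ^ s * T ≤ C * ‖η‖ ^ (-s) := by
      rcases le_or_gt h₁ (n * ‖η‖) with hc | hc
      · have h2 : (n * ‖η‖) ^ s * T ≤ β + 1 := hh₀ _ (le_trans (le_max_left _ _) hc)
        have h3 : (n * ‖η‖) ^ s = n ^ s * ‖η‖ ^ s := Real.mul_rpow hn0.le hnp.le
        have hss : ‖η‖ ^ s * ‖η‖ ^ (-s) = 1 := by
          rw [← Real.rpow_add hnp]; simp
        have h4 : n ^ s * T = ((n * ‖η‖) ^ s * T) * ‖η‖ ^ (-s) := by
          rw [h3]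
          linear_combination (-(n ^ s * T)) * hss
        rw [h4]
        calc ((n * ‖η‖) ^ s * T) * ‖η‖ ^ (-s) ≤ (β + 1) * ‖η‖ ^ (-s) := by
              exact mul_le_mul_of_nonneg_right h2 hinv0
          _ ≤ C * ‖η‖ ^ (-s) := mul_le_mul_of_nonneg_right hCβ hinv0
      · have h5 : n ≤ h₁ / ‖η‖ := (le_div_iff₀ hnp).2 hc.le
        have h6 : n ^ s ≤ (h₁ / ‖η‖) ^ s := Real.rpow_le_rpow hn0.le h5 hs.le
        have h7 : (h₁ / ‖η‖) ^ s = h₁ ^ s * ‖η‖ ^ (-s) := by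
          rw [Real.div_rpow hh₁pos.le hnp.le, Real.rpow_neg hnp.le, div_eq_mul_inv]
        calc n ^ s * T ≤ n ^ s * 1 :=
              mul_le_mul_of_nonneg_left hT1 (Real.rpow_nonneg hn0.le _)
          _ = n ^ s := mul_one _
          _ ≤ h₁ ^ s * ‖η‖ ^ (-s) := by rw [← h7]; exact h6
          _ ≤ C * ‖η‖ ^ (-s) := mul_le_mul_of_nonneg_right hCh hinv0
    have hsplit : ‖η‖ ^ α * ‖η‖ ^ (-s) = ‖η‖ ^ (α - s) := by
      rw [← Real.rpow_add hnp]; ring_nf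
    calc Fn n η = ‖η‖ ^ α * (n ^ s * T) := rfl
      _ ≤ ‖η‖ ^ α * (C * ‖η‖ ^ (-s)) :=
          mul_le_mul_of_nonneg_left hns (Real.rpow_nonneg hnp.le _)
      _ = C * ‖η‖ ^ (α - s) := by
          rw [← hsplit]; ring
  -- measurability of Fn
  have hFmeas : ∀ n : ℝ,
      AEStronglyMeasurable (Fn n) (volume.restrict {η : (EuclideanSpace ℝ (Fin d)) | ∀ i, |η i| ≤ 1 / 2}) := by
    intro n
    have m1 : Measurable fun η : (EuclideanSpace ℝ (Fin d)) => ‖η‖ ^ α := by fun_prop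
    have m2 : Measurable fun η : (EuclideanSpace ℝ (Fin d)) => (μR (Set.Ioi (n * ‖η‖))).toReal :=
      hPmeas.comp (measurable_const.mul measurable_norm)
    exact (m1.mul (m2.const_mul (n ^ s))).aestronglyMeasurable
  -- bound
  have hbound : ∀ᶠ n : ℝ in atTop, ∀ᵐ η ∂(volume.restrict {η : (EuclideanSpace ℝ (Fin d)) | ∀ i, |η i| ≤ 1 / 2}),
      ‖Fn n η‖ ≤ C * ‖η‖ ^ (α - s) := by
    filter_upwards [eventually_ge_atTop (1 : ℝ)] with n hn
    refine ae_restrict_of_ae (h0.mono fun η hη => ?_)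
    have hn0 : (0 : ℝ) < n := lt_of_lt_of_le one_pos hn
    have hF0 : 0 ≤ Fn n η := by
      refine mul_nonneg (Real.rpow_nonneg (norm_nonneg _) _)
        (mul_nonneg (Real.rpow_nonneg hn0.le _) ENNReal.toReal_nonneg)
    rw [Real.norm_eq_abs, abs_of_nonneg hF0]
    exact hkey n hn η hη
  -- bound integrable
  have hbint : Integrable (fun η : (EuclideanSpace ℝ (Fin d)) => C * ‖η‖ ^ (α - s))
      (volume.restrict {η : (EuclideanSpace ℝ (Fin d)) | ∀ i, |η i| ≤ 1 / 2}) := by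
    have ht : -(d : ℝ) < α - s := by linarith
    exact ((aux_int hd ht (d : ℝ)).mono_set hA1sub).const_mul C
  -- pointwise limit
  have hlim : ∀ᵐ η ∂(volume.restrict {η : (EuclideanSpace ℝ (Fin d)) | ∀ i, |η i| ≤ 1 / 2}),
      Tendsto (fun n : ℝ => Fn n η) atTop (𝓝 (β * ‖η‖ ^ (α - s))) := by
    refine ae_restrict_of_ae (h0.mono fun η hη => ?_)
    have hnp : 0 < ‖η‖ := norm_pos_iff.2 hη
    have h1 : Tendsto (fun n : ℝ => n * ‖η‖) atTop atTop :=
      Tendsto.atTop_mul_const hnp tendsto_id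
    have h2 : Tendsto (fun n : ℝ => (n * ‖η‖) ^ s * (μR (Set.Ioi (n * ‖η‖))).toReal)
        atTop (𝓝 β) := htail.comp h1
    have h3 := h2.const_mul (‖η‖ ^ (α - s))
    rw [mul_comm]
    refine Tendsto.congr' ?_ h3
    filter_upwards [eventually_ge_atTop (0 : ℝ)] with n hn
    have hab : ‖η‖ ^ (α - s) * ‖η‖ ^ s = ‖η‖ ^ α := by
      rw [← Real.rpow_add hnp, sub_add_cancel]
    rw [Real.mul_rpow hn (norm_nonneg _)]
    set T := (μR (Set.Ioi (n * ‖η‖))).toReal with hT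
    show ‖η‖ ^ (α - s) * (n ^ s * ‖η‖ ^ s * T) = Fn n η
    rw [hFn]
    linear_combination (n ^ s * T) * hab
  -- dominated convergence
  have hDCT := tendsto_integral_filter_of_dominated_convergence
    (μ := volume.restrict {η : (EuclideanSpace ℝ (Fin d)) | ∀ i, |η i| ≤ 1 / 2})
    (F := Fn) (f := fun η : (EuclideanSpace ℝ (Fin d)) => β * ‖η‖ ^ (α - s))
    (bound := fun η : (EuclideanSpace ℝ (Fin d)) => C * ‖η‖ ^ (α - s))
    (Eventually.of_forall hFmeas) hbound hbint hlim
  rw [show (β * ∫ η in {η : (EuclideanSpace ℝ (Fin d)) | ∀ i, |η i| ≤ 1 / 2}, ‖η‖ ^ (α - s))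
      = ∫ η in {η : (EuclideanSpace ℝ (Fin d)) | ∀ i, |η i| ≤ 1 / 2}, β * ‖η‖ ^ (α - s) from
    (integral_const_mul _ _).symm]
  refine Tendsto.congr' ?_ hDCT
  filter_upwards [eventually_gt_atTop (0 : ℝ)] with n hn
  exact (hstep n hn).symm
end

section
/- Let φ be a finite set of marked points in the torus T_n with distinct marks, let G(φ) be the graph where (ξ,r) and (η,t) are adjacent if d_{T_n}(ξ,η) ≤ max{r,t}, and let G'(φ) be the thinned graph where the edge from (ξ,r) to (η,t) with t < r is kept only if there is no (ζ,w) ∈ φ with d_{T_n}(ξ,ζ) ≤ r, t < w < r, and d_{T_n}(ζ,η) ≤ w. Then G(φ) and G'(φ) have exactly the same connected components. -/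
open MeasureTheory

/-- Toroidal distance on the torus of side length `n`, represented on `[-n/2,n/2]^d`. -/
noncomputable def torDist (d : ℕ) (n : ℝ) (x y : EuclideanSpace ℝ (Fin d)) : ℝ :=
  Real.sqrt (∑ i, (min |x i - y i| (n - |x i - y i|)) ^ 2)

/-- Undirected adjacency in the scale-free Gilbert graph `G(φ)`:
`(ξ,r)` and `(η,t)` are adjacent if `d_{T_n}(ξ,η) ≤ max{r,t}`. -/
noncomputable def gilbertAdj (d : ℕ) (n : ℝ) (x y : EuclideanSpace ℝ (Fin d) × ℝ) : Prop :=
  x ≠ y ∧ torDist d n x.1 y.1 ≤ max x.2 y.2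

/-- Directed edge of the thinned scale-free Gilbert graph `G'(φ)`: the edge from `(ξ,r)`
to `(η,t)` with `t < r` and `d(ξ,η) ≤ r` is kept unless some `(ζ,w) ∈ φ` satisfies
`d(ξ,ζ) ≤ r`, `t < w < r` and `d(ζ,η) ≤ w`. -/
noncomputable def thinnedEdge (d : ℕ) (n : ℝ) (φ : Finset (EuclideanSpace ℝ (Fin d) × ℝ))
    (x y : EuclideanSpace ℝ (Fin d) × ℝ) : Prop :=
  y.2 < x.2 ∧ torDist d n x.1 y.1 ≤ x.2 ∧
    ¬∃ z ∈ φ, torDist d n x.1 z.1 ≤ x.2 ∧ y.2 < z.2 ∧ z.2 < x.2 ∧ torDist d n z.1 y.1 ≤ z.2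

/-!
An edge of `G(φ)` points from the larger mark `r` down to the smaller mark `t`. If it was
thinned, the blocking point `(ζ, w)` has `t < w < r` and is joined to both ends by edges of
`G(φ)` of the same kind, each spanning strictly fewer marks of `φ`; since `φ` is finite,
induction on the number of marks strictly between the two ends replaces every edge of `G(φ)`
by a path in `G'(φ)`. Conversely every edge of `G'(φ)` is an edge of `G(φ)`.
-/

open Relation

lemma torDist_comm (d : ℕ) (n : ℝ) (x y : EuclideanSpace ℝ (Fin d)) :
    torDist d n x y = torDist d n y x := by
  simp only [torDist, abs_sub_comm]

def gilbertRel (d : ℕ) (n : ℝ) (φ : Finset (EuclideanSpace ℝ (Fin d) × ℝ))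
    (a b : EuclideanSpace ℝ (Fin d) × ℝ) : Prop :=
  a ∈ φ ∧ b ∈ φ ∧ gilbertAdj d n a b

def thinnedRel (d : ℕ) (n : ℝ) (φ : Finset (EuclideanSpace ℝ (Fin d) × ℝ))
    (a b : EuclideanSpace ℝ (Fin d) × ℝ) : Prop :=
  a ∈ φ ∧ b ∈ φ ∧ (thinnedEdge d n φ a b ∨ thinnedEdge d n φ b a)

section Thinning

variable {d : ℕ} {n : ℝ} (φ : Finset (EuclideanSpace ℝ (Fin d) × ℝ))

instance : Std.Symm (thinnedRel d n φ) where
  symm _ _ := fun ⟨ha, hb, h⟩ => ⟨hb, ha, h.symm⟩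

lemma gilbertRel_of_thinnedRel {a b : EuclideanSpace ℝ (Fin d) × ℝ}
    (h : thinnedRel d n φ a b) : gilbertRel d n φ a b := by
  obtain ⟨ha, hb, ⟨hlt, hdist, -⟩ | ⟨hlt, hdist, -⟩⟩ := h
  · exact ⟨ha, hb, fun h => hlt.ne' (congrArg Prod.snd h), hdist.trans (le_max_left _ _)⟩
  · refine ⟨ha, hb, fun h => hlt.ne (congrArg Prod.snd h), ?_⟩
    rw [torDist_comm]
    exact hdist.trans (le_max_right _ _)

noncomputable def marksBetween (a b : ℝ) : Finset (EuclideanSpace ℝ (Fin d) × ℝ) :=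
  φ.filter fun z => a < z.2 ∧ z.2 < b

lemma card_marksBetween_lt {a b a' b' : ℝ} (ha : a ≤ a') (hb : b' ≤ b)
    {z : EuclideanSpace ℝ (Fin d) × ℝ} (hz : z ∈ φ) (hz_in : a < z.2 ∧ z.2 < b)
    (hz_out : ¬(a' < z.2 ∧ z.2 < b')) :
    (marksBetween φ a' b').card < (marksBetween φ a b).card := by
  have hsub : marksBetween φ a' b' ⊆ marksBetween φ a b :=
    Finset.monotone_filter_right φ fun _ _ hw => ⟨ha.trans_lt hw.1, hw.2.trans_le hb⟩
  refine Finset.card_lt_card ((Finset.ssubset_iff_of_subset hsub).2 ⟨z, ?_, ?_⟩)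
  · exact Finset.mem_filter.2 ⟨hz, hz_in⟩
  · exact fun h => hz_out (Finset.mem_filter.1 h).2

theorem reflTransGen_thinnedRel_of_dist_le_mark {x y : EuclideanSpace ℝ (Fin d) × ℝ}
    (hx : x ∈ φ) (hy : y ∈ φ) (hlt : y.2 < x.2) (hdist : torDist d n x.1 y.1 ≤ x.2) :
    ReflTransGen (thinnedRel d n φ) x y := by
  induction hN : (marksBetween φ y.2 x.2).card using Nat.strong_induction_on
    generalizing x y with
  | _ N ih =>
    by_cases hblocked : ∃ z ∈ φ, torDist d n x.1 z.1 ≤ x.2 ∧ y.2 < z.2 ∧ z.2 < x.2 ∧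
        torDist d n z.1 y.1 ≤ z.2
    · obtain ⟨z, hz, hxz, hyz, hzx, hzy⟩ := hblocked
      have hxz_path := ih _ (hN ▸ card_marksBetween_lt φ hyz.le le_rfl hz ⟨hyz, hzx⟩
        (fun h => h.1.false)) hx hz hzx hxz rfl
      have hzy_path := ih _ (hN ▸ card_marksBetween_lt φ le_rfl hzx.le hz ⟨hyz, hzx⟩
        (fun h => h.2.false)) hz hy hyz hzy rfl
      exact hxz_path.trans hzy_path
    · exact .single ⟨hx, hy, .inl ⟨hlt, hdist, hblocked⟩⟩

theorem reflTransGen_thinnedRel_of_gilbertRel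
    (hmarks : Set.InjOn Prod.snd (φ : Set (EuclideanSpace ℝ (Fin d) × ℝ)))
    {x y : EuclideanSpace ℝ (Fin d) × ℝ} (h : gilbertRel d n φ x y) :
    ReflTransGen (thinnedRel d n φ) x y := by
  obtain ⟨hx, hy, hne, hdist⟩ := h
  rcases lt_or_gt_of_ne fun h => hne (hmarks hx hy h) with hlt | hlt
  · rw [max_eq_right hlt.le, torDist_comm] at hdist
    exact Std.Symm.symm _ _ (reflTransGen_thinnedRel_of_dist_le_mark φ hy hx hlt hdist)
  · rw [max_eq_left hlt.le] at hdist
    exact reflTransGen_thinnedRel_of_dist_le_mark φ hx hy hlt hdist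

end Thinning

theorem stmt7_general {d : ℕ} {n : ℝ}
    (φ : Finset (EuclideanSpace ℝ (Fin d) × ℝ))
    (hmarks : Set.InjOn Prod.snd (φ : Set (EuclideanSpace ℝ (Fin d) × ℝ))) :
    ∀ x ∈ φ, ∀ y ∈ φ,
      (Relation.ReflTransGen
          (fun a b => a ∈ φ ∧ b ∈ φ ∧ gilbertAdj d n a b) x y ↔
        Relation.ReflTransGen
          (fun a b => a ∈ φ ∧ b ∈ φ ∧ (thinnedEdge d n φ a b ∨ thinnedEdge d n φ b a))
          x y) := by
  intro x _ y _
  exact ⟨reflTransGen_closed (fun _ _ => reflTransGen_thinnedRel_of_gilbertRel φ hmarks) x y,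
    ReflTransGen.mono (fun _ _ => gilbertRel_of_thinnedRel φ) x y⟩

/-- For a finite set `φ` of marked points of the torus with pairwise distinct marks, the
scale-free Gilbert graph `G(φ)` and its thinning `G'(φ)` have exactly the same connected
components: two marked points of `φ` are joined by a path in `G(φ)` iff they are joined
by a path in (the undirected version of) `G'(φ)`. -/
theorem stmt7 {d : ℕ} (hd : 2 ≤ d) {n : ℝ} (hn : 1 ≤ n)
    (φ : Finset (EuclideanSpace ℝ (Fin d) × ℝ))
    (hφpos : ∀ x ∈ φ, 0 ≤ x.2)
    (hmarks : Set.InjOn Prod.snd (φ : Set (EuclideanSpace ℝ (Fin d) × ℝ))) :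
    ∀ x ∈ φ, ∀ y ∈ φ,
      (Relation.ReflTransGen
          (fun a b => a ∈ φ ∧ b ∈ φ ∧ gilbertAdj d n a b) x y ↔
        Relation.ReflTransGen
          (fun a b => a ∈ φ ∧ b ∈ φ ∧ (thinnedEdge d n φ a b ∨ thinnedEdge d n φ b a))
          x y) :=
  stmt7_general φ hmarks
end

section
/- Let φ be a finite set of marked points in the torus T_n with distinct marks, and let G'(φ) be the thinned scale-free Gilbert graph. Suppose x = (ξ,r) and y = (η,t) ∈ φ satisfy d_{T_n}(ξ,η) ≤ r and t < r. If the graph distance between x and y in G'(φ) exceeds m, then there exists a toroidal descending chain in φ starting from x consisting of more than m points, i.e., points x_0 = x, x_1, …, x_m with strictly decreasing marks r_0 > r_1 > ⋯ > r_m and d_{T_n}(ξ_i, ξ_{i+1}) ≤ r_i for all i. -/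
open MeasureTheory

/-- Generic gluing of two sequences satisfying consecutive relation `R` and pointwise `S`. -/
lemma glueSeq {α : Type*} (R : α → α → Prop) (S : α → Prop) {a b : ℕ} {c1 c2 : ℕ → α}
    (hj : c2 0 = c1 a)
    (hm1 : ∀ i ≤ a, S (c1 i)) (hm2 : ∀ i ≤ b, S (c2 i))
    (hr1 : ∀ i < a, R (c1 i) (c1 (i + 1))) (hr2 : ∀ i < b, R (c2 i) (c2 (i + 1))) :
    ∃ c : ℕ → α, c 0 = c1 0 ∧ c (a + b) = c2 b ∧ (∀ i ≤ a + b, S (c i)) ∧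
      ∀ i < a + b, R (c i) (c (i + 1)) := by
  refine ⟨fun i => if i ≤ a then c1 i else c2 (i - a), by simp, ?_, ?_, ?_⟩
  · by_cases h : a + b ≤ a
    · have hb : b = 0 := by omega
      simp [h, hb, hj]
    · simp only [if_neg h]
      congr 1
      omega
  · intro i hi
    by_cases h : i ≤ a
    · simpa [h] using hm1 i h
    · simp only [if_neg h]
      exact hm2 (i - a) (by omega)
  · intro i hi
    by_cases h : i ≤ a
    · by_cases h' : i + 1 ≤ a
      · simpa [h, h'] using hr1 i (by omega)
      · have hia : i = a := by omega
        have e1 : i + 1 - a = 1 := by omega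
        simp only [hia, e1, if_pos h, if_neg h', ← hj]
        have e2 : a + 1 - a = 1 := by omega
        simp only [e2, if_pos (le_refl a), if_neg (show ¬ a + 1 ≤ a by omega), ← hj]
        exact hr2 0 (by omega)
    · simp only [if_neg h, if_neg (show ¬ i + 1 ≤ a by omega)]
      have : i + 1 - a = (i - a) + 1 := by omega
      rw [this]
      exact hr2 (i - a) (by omega)

/-- Key lemma: a chain of `k` steps from `u` to `v` together with a path of `k' ≤ k` hops. -/
lemma keyChainPath {d : ℕ} {n : ℝ} (φ : Finset (EuclideanSpace ℝ (Fin d) × ℝ)) :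
    ∀ N : ℕ, ∀ u v : EuclideanSpace ℝ (Fin d) × ℝ, u ∈ φ → v ∈ φ →
    torDist d n u.1 v.1 ≤ u.2 → v.2 < u.2 →
    (φ.filter fun w => v.2 < w.2 ∧ w.2 < u.2).card ≤ N →
    ∃ k k' : ℕ, 1 ≤ k ∧ k' ≤ k ∧
      (∃ c : ℕ → EuclideanSpace ℝ (Fin d) × ℝ, c 0 = u ∧ c k = v ∧ (∀ i ≤ k, c i ∈ φ) ∧
        ∀ i < k, (c (i + 1)).2 < (c i).2 ∧ torDist d n (c i).1 (c (i + 1)).1 ≤ (c i).2) ∧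
      (∃ c : ℕ → EuclideanSpace ℝ (Fin d) × ℝ, c 0 = u ∧ c k' = v ∧ (∀ i ≤ k', c i ∈ φ) ∧
        ∀ i < k', thinnedEdge d n φ (c i) (c (i + 1)) ∨
          thinnedEdge d n φ (c (i + 1)) (c i)) := by
  classical
  intro N
  induction N with
  | zero =>
    intro u v hu hv huv hvu hcard
    refine ⟨1, 1, le_refl 1, le_refl 1, ?_, ?_⟩
    · refine ⟨fun i => if i = 0 then u else v, by simp, by simp, ?_, ?_⟩
      · intro i hi
        interval_cases i <;> simp [hu, hv]
      · intro i hi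
        interval_cases i
        simpa using ⟨hvu, huv⟩
    · refine ⟨fun i => if i = 0 then u else v, by simp, by simp, ?_, ?_⟩
      · intro i hi
        interval_cases i <;> simp [hu, hv]
      · intro i hi
        interval_cases i
        simp only [if_pos rfl, if_neg (by omega : ¬ (0 + 1 = 0))]
        left
        refine ⟨hvu, huv, ?_⟩
        intro ⟨z, hz, h1, h2, h3, h4⟩
        have : z ∈ φ.filter fun w => v.2 < w.2 ∧ w.2 < u.2 :=
          Finset.mem_filter.mpr ⟨hz, h2, h3⟩
        have := Finset.card_pos.mpr ⟨z, this⟩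
        omega
  | succ N ih =>
    intro u v hu hv huv hvu hcard
    by_cases hblk : ∃ z ∈ φ, torDist d n u.1 z.1 ≤ u.2 ∧ v.2 < z.2 ∧ z.2 < u.2 ∧
        torDist d n z.1 v.1 ≤ z.2
    · obtain ⟨z, hz, hz1, hz2, hz3, hz4⟩ := hblk
      have hzf : z ∈ φ.filter fun w => v.2 < w.2 ∧ w.2 < u.2 :=
        Finset.mem_filter.mpr ⟨hz, hz2, hz3⟩
      -- card bounds for the two subproblems
      have hcard1 : (φ.filter fun w => z.2 < w.2 ∧ w.2 < u.2).card ≤ N := by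
        have hsub : (φ.filter fun w => z.2 < w.2 ∧ w.2 < u.2) ⊆
            (φ.filter fun w => v.2 < w.2 ∧ w.2 < u.2).erase z := by
          intro w hw
          rw [Finset.mem_filter] at hw
          refine Finset.mem_erase.mpr ⟨?_, Finset.mem_filter.mpr ⟨hw.1, lt_trans hz2 hw.2.1, hw.2.2⟩⟩
          intro hwz
          rw [hwz] at hw
          exact absurd hw.2.1 (lt_irrefl _)
        have := Finset.card_le_card hsub
        rw [Finset.card_erase_of_mem hzf] at this
        omega
      have hcard2 : (φ.filter fun w => v.2 < w.2 ∧ w.2 < z.2).card ≤ N := by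
        have hsub : (φ.filter fun w => v.2 < w.2 ∧ w.2 < z.2) ⊆
            (φ.filter fun w => v.2 < w.2 ∧ w.2 < u.2).erase z := by
          intro w hw
          rw [Finset.mem_filter] at hw
          refine Finset.mem_erase.mpr ⟨?_, Finset.mem_filter.mpr ⟨hw.1, hw.2.1, lt_trans hw.2.2 hz3⟩⟩
          intro hwz
          rw [hwz] at hw
          exact absurd hw.2.2 (lt_irrefl _)
        have := Finset.card_le_card hsub
        rw [Finset.card_erase_of_mem hzf] at this
        omega
      obtain ⟨k1, k1', hk1, hk1', ⟨c1, hc10, hc1k, hc1m, hc1s⟩, ⟨p1, hp10, hp1k, hp1m, hp1s⟩⟩ :=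
        ih u z hu hz hz1 hz3 hcard1
      obtain ⟨k2, k2', hk2, hk2', ⟨c2, hc20, hc2k, hc2m, hc2s⟩, ⟨p2, hp20, hp2k, hp2m, hp2s⟩⟩ :=
        ih z v hz hv hz4 hz2 hcard2
      refine ⟨k1 + k2, k1' + k2', by omega, by omega, ?_, ?_⟩
      · obtain ⟨c, h0, hk, hm, hs⟩ := glueSeq
          (fun p q => q.2 < p.2 ∧ torDist d n p.1 q.1 ≤ p.2) (· ∈ φ)
          (hc20.trans hc1k.symm) hc1m hc2m hc1s hc2s
        exact ⟨c, h0.trans hc10, hk.trans hc2k, hm, hs⟩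
      · obtain ⟨c, h0, hk, hm, hs⟩ := glueSeq
          (fun p q => thinnedEdge d n φ p q ∨ thinnedEdge d n φ q p) (· ∈ φ)
          (hp20.trans hp1k.symm) hp1m hp2m hp1s hp2s
        exact ⟨c, h0.trans hp10, hk.trans hp2k, hm, hs⟩
    · refine ⟨1, 1, le_refl 1, le_refl 1, ?_, ?_⟩
      · refine ⟨fun i => if i = 0 then u else v, by simp, by simp, ?_, ?_⟩
        · intro i hi
          interval_cases i <;> simp [hu, hv]
        · intro i hi
          interval_cases i
          simpa using ⟨hvu, huv⟩
      · refine ⟨fun i => if i = 0 then u else v, by simp, by simp, ?_, ?_⟩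
        · intro i hi
          interval_cases i <;> simp [hu, hv]
        · intro i hi
          interval_cases i
          simp only [if_pos rfl, if_neg (by omega : ¬ (0 + 1 = 0))]
          left
          exact ⟨hvu, huv, hblk⟩

/-- If `x = (ξ,r)` and `y = (η,t)` in `φ` satisfy `d_{T_n}(ξ,η) ≤ r` and `t < r`, and if
the graph distance between `x` and `y` in the (undirected) thinned scale-free Gilbert
graph `G'(φ)` exceeds `m` (there is no path of at most `m` hops), then `φ` contains a
toroidal descending chain starting at `x` with more than `m` points:
`x_0 = x, x_1, …, x_m` with strictly decreasing marks and
`d_{T_n}(ξ_i, ξ_{i+1}) ≤ r_i` for all `i`. -/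
theorem stmt8 {d : ℕ} (hd : 2 ≤ d) {n : ℝ} (hn : 1 ≤ n)
    (φ : Finset (EuclideanSpace ℝ (Fin d) × ℝ))
    (hφpos : ∀ x ∈ φ, 0 ≤ x.2)
    (hmarks : Set.InjOn Prod.snd (φ : Set (EuclideanSpace ℝ (Fin d) × ℝ)))
    (x y : EuclideanSpace ℝ (Fin d) × ℝ) (hx : x ∈ φ) (hy : y ∈ φ)
    (hxy : torDist d n x.1 y.1 ≤ x.2) (hty : y.2 < x.2) (m : ℕ)
    (hfar : ¬∃ k, k ≤ m ∧ ∃ c : Fin (k + 1) → EuclideanSpace ℝ (Fin d) × ℝ,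
        (∀ i, c i ∈ φ) ∧ c 0 = x ∧ c (Fin.last k) = y ∧
        ∀ i : Fin k, thinnedEdge d n φ (c i.castSucc) (c i.succ) ∨
          thinnedEdge d n φ (c i.succ) (c i.castSucc)) :
    ∃ c : Fin (m + 1) → EuclideanSpace ℝ (Fin d) × ℝ,
      (∀ i, c i ∈ φ) ∧ c 0 = x ∧
      (∀ i j : Fin (m + 1), i < j → (c j).2 < (c i).2) ∧
      ∀ i : Fin m, torDist d n (c i.castSucc).1 (c i.succ).1 ≤ (c i.castSucc).2 := by
  obtain ⟨k, k', hk1, hk'k, ⟨c, hc0, hck, hcm, hcs⟩, ⟨p, hp0, hpk, hpm, hps⟩⟩ :=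
    keyChainPath φ φ.card x y hx hy hxy hty (Finset.card_filter_le _ _)
  -- the path contradicts hfar unless k' > m
  have hk'm : m < k' := by
    by_contra h
    push_neg at h
    apply hfar
    refine ⟨k', h, fun i => p (i : ℕ), fun i => hpm i (by omega), ?_, ?_, ?_⟩
    · simpa using hp0
    · simpa using hpk
    · intro i
      have := hps (i : ℕ) i.isLt
      simpa using this
  have hmk : m + 1 ≤ k := by omega
  -- pairwise monotonicity of marks along the chain
  have mono : ∀ j ≤ k, ∀ i < j, (c j).2 < (c i).2 := by
    intro j
    induction j with
    | zero => omega
    | succ j ihj =>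
      intro hj i hi
      have hstep : (c (j + 1)).2 < (c j).2 := (hcs j (by omega)).1
      rcases Nat.lt_succ_iff_lt_or_eq.mp hi with h | h
      · exact lt_trans hstep (ihj (by omega) i h)
      · rw [h]; exact hstep
  refine ⟨fun i => c (i : ℕ), fun i => hcm i (by omega), by simpa using hc0, ?_, ?_⟩
  · intro i j hij
    exact mono j (by omega) i hij
  · intro i
    have := (hcs (i : ℕ) (by omega)).2
    simpa using this
end
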